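/- arXiv:0912.5426 — 3 statements merged into one kernel-verified Lean document; each statement's English description precedes it below -/
import Mathlib

section
/- Let P be a 3-diverse partition of the rows of the constructed table T, and let G be a useful QI-group of P. Then (i) G contains exactly 3 rows, (ii) G agrees on exactly one attribute and disagrees on the remaining d−1 attributes, so G contributes exactly 3(d−1) stars, and (iii) the common value on the unique agreed attribute is 0, so G contains exactly 3 zero (non-star) entries. -/
open scoped Classical

/-- The `k`-th coordinate (`k ∈ Fin 3`) of a 3D point. -/
def coord3 {n : ℕ} (k : Fin 3) (q : Fin n × Fin n × Fin n) : Fin n :=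
  if k = 0 then q.1 else if k = 1 then q.2.1 else q.2.2

/-- The QI value of row `r = (k, a)` of the constructed table on attribute `A_i`:
it is `0` if the `k`-th coordinate of `p i` equals `a`, and `u r` otherwise. -/
def qiT {n d m : ℕ} (p : Fin d → Fin n × Fin n × Fin n)
    (u : Fin 3 × Fin n → Fin (m + 1)) (r : Fin 3 × Fin n) (i : Fin d) : Fin (m + 1) :=
  if coord3 r.1 (p i) = r.2 then 0 else u r

/-- A partition of the row set `Fin 3 × Fin n` into pairwise disjoint nonempty
QI-groups covering all rows. -/
structure RPartition (n : ℕ) where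
  groups : Finset (Finset (Fin 3 × Fin n))
  nonempty : ∀ G ∈ groups, G.Nonempty
  pairwiseDisjoint : (groups : Set (Finset (Fin 3 × Fin n))).PairwiseDisjoint id
  covers : ∀ r : Fin 3 × Fin n, ∃ G ∈ groups, r ∈ G

/-- A group `G` disagrees on attribute `A_i` if two of its rows have different
QI values on `A_i`. -/
def Disagrees3 {n d m : ℕ} (p : Fin d → Fin n × Fin n × Fin n)
    (u : Fin 3 × Fin n → Fin (m + 1)) (G : Finset (Fin 3 × Fin n)) (i : Fin d) : Prop :=
  ∃ r ∈ G, ∃ r' ∈ G, qiT p u r i ≠ qiT p u r' i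

/-- A group is useful if there is at least one attribute on which it does not
disagree (i.e., it is not futile). -/
def Useful3 {n d m : ℕ} (p : Fin d → Fin n × Fin n × Fin n)
    (u : Fin 3 × Fin n → Fin (m + 1)) (G : Finset (Fin 3 × Fin n)) : Prop :=
  ∃ i : Fin d, ¬ Disagrees3 p u G i

/-- A group `G` is 3-eligible if for every sensitive value `v`,
`3` times the number of rows of `G` with sensitive value `v` is at most `|G|`. -/
def Eligible3 {n m : ℕ} (u : Fin 3 × Fin n → Fin (m + 1))
    (G : Finset (Fin 3 × Fin n)) : Prop :=
  ∀ v : Fin (m + 1), 3 * (G.filter (fun r => u r = v)).card ≤ G.card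

/-- A partition is 3-diverse if every one of its QI-groups is 3-eligible. -/
def Diverse3 {n m : ℕ} (u : Fin 3 × Fin n → Fin (m + 1)) (P : RPartition n) : Prop :=
  ∀ G ∈ P.groups, Eligible3 u G

/-- Number of stars of a partition of the constructed table. -/
noncomputable def stars3 {n d m : ℕ} (p : Fin d → Fin n × Fin n × Fin n)
    (u : Fin 3 × Fin n → Fin (m + 1)) (P : RPartition n) : ℕ :=
  ∑ G ∈ P.groups, G.card * (Finset.univ.filter (fun i : Fin d => Disagrees3 p u G i)).card
/-!
An agreed attribute `A_i` of a useful group cannot carry a common nonzero value: that value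
would be the sensitive value of every row, violating 3-eligibility. So every row `(k, a)` of the
group has QI value `0` on `A_i`, i.e. `a` is the `k`-th coordinate of `p i`, and the group lies in
the three rows `(k, coord3 k (p i))` of the point `p i`. Eligibility also forces at least three
rows, so the group is exactly these three rows, and injectivity of `p` leaves a single agreed
attribute.
-/

theorem eq_of_coord3_eq {n : ℕ} {q q' : Fin n × Fin n × Fin n}
    (h : ∀ k, coord3 k q = coord3 k q') : q = q' := by
  have h0 := h 0
  have h1 := h 1
  have h2 := h 2
  simp only [coord3, if_pos, if_neg, Fin.reduceEq, not_false_eq_true] at h0 h1 h2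
  exact Prod.ext h0 (Prod.ext h1 h2)

/-- The three rows of the table whose entries are `0` on an attribute `A_i` with `p i = q`. -/
def pointRows {n : ℕ} (q : Fin n × Fin n × Fin n) : Finset (Fin 3 × Fin n) :=
  Finset.univ.image fun k => (k, coord3 k q)

theorem mem_pointRows {n : ℕ} {q : Fin n × Fin n × Fin n} {r : Fin 3 × Fin n} :
    r ∈ pointRows q ↔ coord3 r.1 q = r.2 := by
  constructor
  · intro hr
    obtain ⟨k, -, rfl⟩ := Finset.mem_image.mp hr
    rfl
  · intro hr
    exact Finset.mem_image.mpr ⟨r.1, Finset.mem_univ _, by rw [hr]⟩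

theorem card_pointRows {n : ℕ} (q : Fin n × Fin n × Fin n) : (pointRows q).card = 3 := by
  rw [pointRows, Finset.card_image_of_injective _ fun k k' h => congrArg Prod.fst h]
  rfl

theorem pointRows_injective {n : ℕ} : Function.Injective (pointRows (n := n)) := by
  intro q q' h
  refine eq_of_coord3_eq fun k => ?_
  have hk : (k, coord3 k q) ∈ pointRows q' := h ▸ mem_pointRows.mpr rfl
  exact (mem_pointRows.mp hk).symm

section Table

variable {n d m : ℕ} {p : Fin d → Fin n × Fin n × Fin n} {u : Fin 3 × Fin n → Fin (m + 1)}
  {G : Finset (Fin 3 × Fin n)}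

theorem qiT_eq_zero_iff (hu0 : ∀ r, u r ≠ 0) {r : Fin 3 × Fin n} {i : Fin d} :
    qiT p u r i = 0 ↔ coord3 r.1 (p i) = r.2 := by
  unfold qiT
  split_ifs with h
  · exact iff_of_true rfl h
  · exact iff_of_false (hu0 r) h

theorem Eligible3.three_le_card (hel : Eligible3 u G) (hG : G.Nonempty) : 3 ≤ G.card := by
  obtain ⟨r, hr⟩ := hG
  have hpos : 0 < (G.filter fun r' => u r' = u r).card :=
    Finset.card_pos.mpr ⟨r, Finset.mem_filter.mpr ⟨hr, rfl⟩⟩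
  linarith [hel (u r)]

theorem Eligible3.not_forall_eq (hel : Eligible3 u G) (hG : G.Nonempty) (v : Fin (m + 1)) :
    ¬ ∀ r ∈ G, u r = v := by
  intro hall
  have h := hel v
  rw [Finset.filter_true_of_mem hall] at h
  have := hG.card_pos
  omega

theorem qiT_eq_zero_of_not_disagrees (hel : Eligible3 u G) (hG : G.Nonempty) {i : Fin d}
    (hi : ¬ Disagrees3 p u G i) {r : Fin 3 × Fin n} (hr : r ∈ G) : qiT p u r i = 0 := by
  have hconst : ∀ r' ∈ G, qiT p u r' i = qiT p u r i := by
    by_contra! h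
    obtain ⟨r', hr', hne⟩ := h
    exact hi ⟨r', hr', r, hr, hne⟩
  by_contra hne
  refine hel.not_forall_eq hG (qiT p u r i) fun r' hr' => ?_
  have hr'ne : qiT p u r' i ≠ 0 := hconst r' hr' ▸ hne
  rw [← hconst r' hr']
  unfold qiT at hr'ne ⊢
  rw [if_neg fun h => hr'ne (if_pos h)]

theorem eq_pointRows_of_not_disagrees (hu0 : ∀ r, u r ≠ 0) (hel : Eligible3 u G)
    (hG : G.Nonempty) {i : Fin d} (hi : ¬ Disagrees3 p u G i) : G = pointRows (p i) := by
  have hsub : G ⊆ pointRows (p i) := fun r hr =>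
    mem_pointRows.mpr ((qiT_eq_zero_iff hu0).mp (qiT_eq_zero_of_not_disagrees hel hG hi hr))
  refine Finset.eq_of_subset_of_card_le hsub ?_
  rw [card_pointRows]
  exact hel.three_le_card hG

theorem filter_not_disagrees_eq_singleton (hp : Function.Injective p) (hu0 : ∀ r, u r ≠ 0)
    (hel : Eligible3 u G) (hG : G.Nonempty) {i₀ : Fin d} (hi₀ : ¬ Disagrees3 p u G i₀) :
    Finset.univ.filter (fun i => ¬ Disagrees3 p u G i) = {i₀} := by
  ext i
  simp only [Finset.mem_filter, Finset.mem_univ, true_and, Finset.mem_singleton]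
  refine ⟨fun hi => hp (pointRows_injective ?_), fun h => h ▸ hi₀⟩
  rw [← eq_pointRows_of_not_disagrees hu0 hel hG hi,
    ← eq_pointRows_of_not_disagrees hu0 hel hG hi₀]

end Table

theorem stmt6_general {n d m : ℕ}
    (p : Fin d → Fin n × Fin n × Fin n) (hp : Function.Injective p)
    (u : Fin 3 × Fin n → Fin (m + 1))
    (hu0 : ∀ r, u r ≠ 0)
    (P : RPartition n) (hP : Diverse3 u P)
    (G : Finset (Fin 3 × Fin n)) (hG : G ∈ P.groups) (huseful : Useful3 p u G) :
    -- (i) G contains exactly 3 rows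
    G.card = 3 ∧
    -- (ii) G agrees on exactly one attribute, disagrees on the other d − 1,
    -- hence contributes exactly 3(d − 1) stars
    (Finset.univ.filter (fun i : Fin d => ¬ Disagrees3 p u G i)).card = 1 ∧
    (Finset.univ.filter (fun i : Fin d => Disagrees3 p u G i)).card = d - 1 ∧
    G.card * (Finset.univ.filter (fun i : Fin d => Disagrees3 p u G i)).card = 3 * (d - 1) ∧
    -- (iii) the common value on every agreed attribute is 0, so G contains
    -- exactly 3 zero (non-star) entries
    (∀ i : Fin d, ¬ Disagrees3 p u G i → ∀ r ∈ G, qiT p u r i = 0) ∧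
    (∑ r ∈ G, (Finset.univ.filter (fun i : Fin d => ¬ Disagrees3 p u G i ∧
      qiT p u r i = 0)).card) = 3 := by
  obtain ⟨i₀, hi₀⟩ := huseful
  have hel := hP G hG
  have hne := P.nonempty G hG
  have hzero : ∀ i, ¬ Disagrees3 p u G i → ∀ r ∈ G, qiT p u r i = 0 := fun _ hi _ hr =>
    qiT_eq_zero_of_not_disagrees hel hne hi hr
  have hcard : G.card = 3 := by
    rw [eq_pointRows_of_not_disagrees hu0 hel hne hi₀, card_pointRows]
  have hagreed := filter_not_disagrees_eq_singleton hp hu0 hel hne hi₀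
  have hdisagreed : (Finset.univ.filter (fun i : Fin d => Disagrees3 p u G i)).card = d - 1 := by
    have := Finset.card_filter_add_card_filter_not (s := Finset.univ)
      (p := fun i => Disagrees3 p u G i)
    rw [hagreed, Finset.card_univ, Fintype.card_fin, Finset.card_singleton] at this
    omega
  have hrow : ∀ r ∈ G, Finset.univ.filter (fun i : Fin d => ¬ Disagrees3 p u G i ∧
      qiT p u r i = 0) = {i₀} := fun r hr => by
    rw [← hagreed]
    exact Finset.filter_congr fun i _ => and_iff_left_of_imp fun hi => hzero i hi r hr
  refine ⟨hcard, by rw [hagreed, Finset.card_singleton], hdisagreed, by rw [hcard, hdisagreed],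
    hzero, ?_⟩
  rw [Finset.sum_congr rfl fun r hr => by rw [hrow r hr, Finset.card_singleton],
    Finset.sum_const, smul_eq_mul, mul_one, hcard]

theorem stmt6 {n d m : ℕ} (hn : 1 ≤ n) (hnd : n ≤ d) (hm3 : 3 ≤ m) (hm : m ≤ 3 * n)
    (p : Fin d → Fin n × Fin n × Fin n) (hp : Function.Injective p)
    (u : Fin 3 × Fin n → Fin (m + 1))
    (hu0 : ∀ r, u r ≠ 0)
    (husurj : ∀ v : Fin (m + 1), v ≠ 0 → ∃ r, u r = v)
    (hudiff : ∀ k k' : Fin 3, ∀ a a' : Fin n, k ≠ k' → u (k, a) ≠ u (k', a'))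
    (P : RPartition n) (hP : Diverse3 u P)
    (G : Finset (Fin 3 × Fin n)) (hG : G ∈ P.groups) (huseful : Useful3 p u G) :
    -- (i) G contains exactly 3 rows
    G.card = 3 ∧
    -- (ii) G agrees on exactly one attribute, disagrees on the other d − 1,
    -- hence contributes exactly 3(d − 1) stars
    (Finset.univ.filter (fun i : Fin d => ¬ Disagrees3 p u G i)).card = 1 ∧
    (Finset.univ.filter (fun i : Fin d => Disagrees3 p u G i)).card = d - 1 ∧
    G.card * (Finset.univ.filter (fun i : Fin d => Disagrees3 p u G i)).card = 3 * (d - 1) ∧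
    -- (iii) the common value on every agreed attribute is 0, so G contains
    -- exactly 3 zero (non-star) entries
    (∀ i : Fin d, ¬ Disagrees3 p u G i → ∀ r ∈ G, qiT p u r i = 0) ∧
    (∑ r ∈ G, (Finset.univ.filter (fun i : Fin d => ¬ Disagrees3 p u G i ∧
      qiT p u r i = 0)).card) = 3 :=
  stmt6_general p hp u hu0 P hP G hG huseful
end

section
/- Let k ≥ 1 and let R_0, R_1, ..., R_k be finite multisets over B such that h(R_j) = h(R_0) for all j, card R_{j+1} ≤ card R_j + l for all j < k, R_j is not l-eligible for all j < k, and R_k is l-eligible. Then card R_k ≤ l · h(R_0) + l − 1. (This is the guarantee when the algorithm terminates during phase two: the residue set then has size at most l · h(Ṙ) + l − 1, hence at most OPT + l − 1.) -/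
/-- A finite multiset `S` over `B` is `l`-eligible if for every `b : B`,
`l` times the multiplicity of `b` in `S` is at most the cardinality of `S`. -/
def MEligible {B : Type*} [DecidableEq B] (l : ℕ) (S : Multiset B) : Prop :=
  ∀ b : B, l * S.count b ≤ Multiset.card S

/-- The pillar height of `S`: the maximum multiplicity of any element of `S`
(`0` for the empty multiset). -/
def pillarHeight {B : Type*} [DecidableEq B] (S : Multiset B) : ℕ :=
  S.toFinset.sup S.count

/-- A pillar of `S` is a value whose multiplicity in `S` equals the (positive)
pillar height of `S`. -/
def IsPillar {B : Type*} [DecidableEq B] (S : Multiset B) (b : B) : Prop :=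
  0 < pillarHeight S ∧ S.count b = pillarHeight S

/-! Only the last step matters: `R (k - 1)` is not eligible, so its size is below
`l · h(R₀)`, and one step adds at most `l` elements. -/

section

variable {B : Type*} [DecidableEq B]

lemma count_le_pillarHeight (S : Multiset B) (b : B) : S.count b ≤ pillarHeight S := by
  by_cases hb : b ∈ S
  · exact Finset.le_sup (f := S.count) (Multiset.mem_toFinset.mpr hb)
  · simp [Multiset.count_eq_zero_of_notMem hb]

lemma card_lt_mul_pillarHeight_of_not_mEligible {l : ℕ} {S : Multiset B}
    (hS : ¬ MEligible l S) : Multiset.card S < l * pillarHeight S := by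
  obtain ⟨b, hb⟩ : ∃ b, Multiset.card S < l * S.count b := by
    simpa [MEligible] using hS
  exact hb.trans_le (Nat.mul_le_mul_left l (count_le_pillarHeight S b))

end

theorem stmt13_general {B : Type*} [DecidableEq B] (l : ℕ)
    (k : ℕ) (hk : 1 ≤ k) (R : ℕ → Multiset B)
    (hpillar : ∀ j ≤ k, pillarHeight (R j) = pillarHeight (R 0))
    (hstep : ∀ j < k, Multiset.card (R (j + 1)) ≤ Multiset.card (R j) + l)
    (hnot : ∀ j < k, ¬ MEligible l (R j)) :
    Multiset.card (R k) ≤ l * pillarHeight (R 0) + l - 1 := by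
  obtain ⟨m, rfl⟩ : ∃ m, k = m + 1 := ⟨k - 1, by omega⟩
  have hlast : Multiset.card (R m) < l * pillarHeight (R 0) := by
    rw [← hpillar m m.le_succ]
    exact card_lt_mul_pillarHeight_of_not_mEligible (hnot m m.lt_succ_self)
  have := hstep m m.lt_succ_self
  omega

theorem stmt13 {B : Type*} [DecidableEq B] (l : ℕ) (hl : 1 ≤ l)
    (k : ℕ) (hk : 1 ≤ k) (R : ℕ → Multiset B)
    (hpillar : ∀ j ≤ k, pillarHeight (R j) = pillarHeight (R 0))
    (hstep : ∀ j < k, Multiset.card (R (j + 1)) ≤ Multiset.card (R j) + l)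
    (hnot : ∀ j < k, ¬ MEligible l (R j))
    (hfinal : MEligible l (R k)) :
    Multiset.card (R k) ≤ l * pillarHeight (R 0) + l - 1 :=
  stmt13_general l k hk R hpillar hstep hnot
end

section
/- Fix l = 2. Let Q_1,...,Q_s and R be finite multisets over B such that the total multiset T = R + Σ_{i=1}^s Q_i is 2-eligible and each Q_i is thin (card Q_i = 2 · h(Q_i)) and conflicting (some pillar of Q_i is also a pillar of R). Then R is 2-eligible, i.e., card R ≥ 2 · h(R). (Hence for l = 2 the algorithm always terminates during the first two phases.) -/
theorem Multiset.count_add_count_le_card {α : Type*} [DecidableEq α] {a b : α} (hab : a ≠ b)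
    (S : Multiset α) : S.count a + S.count b ≤ Multiset.card S :=
  calc S.count a + S.count b = ∑ x ∈ {a, b}, S.count x :=
        (Finset.sum_pair (f := fun x => S.count x) hab).symm
    _ ≤ ∑ x ∈ S.toFinset ∪ {a, b}, S.count x :=
        Finset.sum_le_sum_of_subset Finset.subset_union_right
    _ = Multiset.card S := Multiset.sum_count_eq_card fun _ hx =>
      Finset.mem_union_left _ (Multiset.mem_toFinset.2 hx)

theorem Multiset.mul_count_le_card_of_add {α : Type*} [DecidableEq α] {l : ℕ} {p : α}
    {R S : Multiset α} (hRS : l * (R + S).count p ≤ Multiset.card (R + S))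
    (hS : Multiset.card S ≤ l * S.count p) : l * R.count p ≤ Multiset.card R := by
  rw [Multiset.count_add, Multiset.card_add, mul_add] at hRS
  omega

theorem Multiset.card_sum_le_mul_count_sum {ι α : Type*} [DecidableEq α] {l : ℕ} {p : α}
    (s : Finset ι) (Q : ι → Multiset α)
    (hQ : ∀ i ∈ s, Multiset.card (Q i) ≤ l * (Q i).count p) :
    Multiset.card (∑ i ∈ s, Q i) ≤ l * (∑ i ∈ s, Q i).count p := by
  rw [Multiset.card_sum, Multiset.count_sum', Finset.mul_sum]
  exact Finset.sum_le_sum hQ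

section Pillar

variable {B : Type*} [DecidableEq B] {S : Multiset B} {p q : B}

theorem exists_isPillar_of_pillarHeight_pos (h : 0 < pillarHeight S) : ∃ p, IsPillar S p := by
  have hne : S.toFinset.Nonempty := by
    rw [Finset.nonempty_iff_ne_empty]
    rintro hS
    simp [pillarHeight, hS] at h
  obtain ⟨p, -, hp⟩ := Finset.exists_mem_eq_sup S.toFinset hne S.count
  exact ⟨p, h, hp.symm⟩

theorem two_mul_pillarHeight_le_card_of_isPillar_of_ne (hp : IsPillar S p) (hq : IsPillar S q)
    (hpq : p ≠ q) : 2 * pillarHeight S ≤ Multiset.card S := by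
  have := S.count_add_count_le_card hpq
  rw [hp.2, hq.2] at this
  omega

theorem IsPillar.card_eq_two_mul_count (hp : IsPillar S p)
    (hthin : Multiset.card S = 2 * pillarHeight S) : Multiset.card S = 2 * S.count p := by
  rw [hthin, hp.2]

end Pillar

theorem stmt16 {B : Type*} [DecidableEq B] {s : ℕ}
    (Q : Fin s → Multiset B) (R : Multiset B)
    (htotal : MEligible 2 (R + ∑ i, Q i))
    (hthin : ∀ i, Multiset.card (Q i) = 2 * pillarHeight (Q i))
    (hconf : ∀ i, ∃ p : B, IsPillar (Q i) p ∧ IsPillar R p) :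
    2 * pillarHeight R ≤ Multiset.card R := by
  obtain h0 | hpos := (pillarHeight R).eq_zero_or_pos
  · simp [h0]
  obtain ⟨p, hp⟩ := exists_isPillar_of_pillarHeight_pos hpos
  by_cases hunique : ∀ q, IsPillar R q → q = p
  · have hQ : ∀ i ∈ Finset.univ, Multiset.card (Q i) ≤ 2 * (Q i).count p := fun i _ => by
      obtain ⟨q, hqQ, hqR⟩ := hconf i
      rw [← hunique q hqR, hqQ.card_eq_two_mul_count (hthin i)]
    rw [← hp.2]
    exact Multiset.mul_count_le_card_of_add (htotal p)
      (Multiset.card_sum_le_mul_count_sum _ Q hQ)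
  · push Not at hunique
    obtain ⟨q, hq, hqp⟩ := hunique
    exact two_mul_pillarHeight_le_card_of_isPillar_of_ne hq hp hqp
end
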